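/- Let G be an oligomorphic closed subgroup of Sym(ω) and M_G its canonical structure. Then for every 0 < k < ω, the expanded structure E^ex_{M_G}(k) is ω-categorical, i.e., its automorphism group acts oligomorphically on its domain. -/

import Mathlib

open FirstOrder

namespace Paper

variable (L : FirstOrder.Language) (M : Type*) [L.Structure M]

/-- The group of automorphisms of a first-order structure, with composition. -/
instance autGroup : Group (M ≃[L] M) where
  one := FirstOrder.Language.Equiv.refl L M
  mul f g := f.comp g
  inv := FirstOrder.Language.Equiv.symm
  mul_assoc _ _ _ := rfl
  one_mul f := FirstOrder.Language.Equiv.ext fun a => by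
    show (FirstOrder.Language.Equiv.refl L M).comp f a = f a; simp
  mul_one f := FirstOrder.Language.Equiv.ext fun a => by
    show f.comp (FirstOrder.Language.Equiv.refl L M) a = f a; simp
  inv_mul_cancel f := FirstOrder.Language.Equiv.ext fun a => by
    show f.symm.comp f a = FirstOrder.Language.Equiv.refl L M a; simp

@[simp] theorem aut_one_apply (a : M) : (1 : M ≃[L] M) a = a := by
  show FirstOrder.Language.Equiv.refl L M a = a; simp
@[simp] theorem aut_mul_apply (f g : M ≃[L] M) (a : M) : (f * g) a = f (g a) := rfl
@[simp] theorem aut_inv_apply (f : M ≃[L] M) (a : M) : f⁻¹ a = f.symm a := rfl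
@[simp] theorem aut_coe_mul (f g : M ≃[L] M) : ⇑(f * g) = ⇑f ∘ ⇑g := rfl

/-- The natural action of the automorphism group on the structure. -/
instance autAction : MulAction (M ≃[L] M) M where
  smul f a := f a
  one_smul _ := rfl
  mul_smul _ _ _ := rfl

@[simp] theorem aut_smul_def (f : M ≃[L] M) (a : M) : f • a = f a := rfl

/-- The topology of pointwise convergence on the automorphism group (the domain
being regarded as discrete). -/
instance autTopology : TopologicalSpace (M ≃[L] M) :=
  letI : TopologicalSpace M := ⊥
  TopologicalSpace.induced (fun g => (g : M → M)) Pi.topologicalSpace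

/-- The pointwise stabilizer `G_(A)` of a set `A ⊆ M` in `Aut(M)`. -/
def pstab (A : Set M) : Subgroup (M ≃[L] M) where
  carrier := {g | ∀ a ∈ A, g a = a}
  one_mem' := fun _ _ => rfl
  mul_mem' := by
    intro f g hf hg a ha
    simp only [Set.mem_setOf_eq] at *
    rw [aut_mul_apply, hg a ha, hf a ha]
  inv_mem' := by
    intro f hf a ha
    simp only [Set.mem_setOf_eq] at *
    rw [aut_inv_apply]
    conv_lhs => rw [← hf a ha]
    exact f.symm_apply_apply a

/-- The setwise stabilizer `G_{A}` of a set `A ⊆ M` in `Aut(M)`. -/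
def sstab (A : Set M) : Subgroup (M ≃[L] M) where
  carrier := {g | g '' A = A}
  one_mem' := by
    simp only [Set.mem_setOf_eq]
    ext a; simp [Set.mem_image]
  mul_mem' := by
    intro f g hf hg
    simp only [Set.mem_setOf_eq] at *
    rw [aut_coe_mul, Set.image_comp, hg, hf]
  inv_mem' := by
    intro f hf
    simp only [Set.mem_setOf_eq] at *
    conv_lhs => rw [← hf]
    rw [Set.image_image]
    ext a; constructor
    · rintro ⟨x, hx, rfl⟩
      simpa [f.symm_apply_apply] using hx
    · intro ha
      exact ⟨a, ha, f.symm_apply_apply a⟩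

/-- The Galois-algebraic closure of `A ⊆ M`: the set of elements with finite orbit
under the pointwise stabilizer of `A`. -/
def aclg (A : Set M) : Set M :=
  {b | (MulAction.orbit (pstab L M A) b).Finite}

/-- The Galois-definable closure of the empty set: elements fixed by every automorphism. -/
def dclg0 : Set M := {b | ∀ g : M ≃[L] M, g b = b}

/-- `p : K ≃ K'` is an isomorphism between the induced substructures on `K` and `K'`. -/
def IsPartialIso (K K' : Set M) (p : K ≃ K') : Prop :=
  (∀ {n : ℕ} (f : L.Functions n) (x : Fin n → K),
      ∃ h : FirstOrder.Language.Structure.funMap f (fun i => (x i : M)) ∈ K,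
        (p ⟨FirstOrder.Language.Structure.funMap f (fun i => (x i : M)), h⟩ : M) =
          FirstOrder.Language.Structure.funMap f (fun i => (p (x i) : M))) ∧
  (∀ {n : ℕ} (r : L.Relations n) (x : Fin n → K),
      FirstOrder.Language.Structure.RelMap r (fun i => (x i : M)) ↔
        FirstOrder.Language.Structure.RelMap r (fun i => (p (x i) : M)))

/-- `A(M)`: the collection of Galois-algebraic closures of finite subsets of `M`. -/
def AA : Set (Set M) := {K | ∃ A : Set M, A.Finite ∧ K = aclg L M A}

/-- Hypothesis (H). -/
structure HypH : Prop where
  countable : Countable M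
  locallyFinite : ∀ A : Set M, A.Finite → (aclg L M A).Finite
  extendsIso : ∀ (K K' : Set M), K.Finite → K'.Finite →
    aclg L M K = K → aclg L M K' = K' → ∀ p : K ≃ K', IsPartialIso L M K K' p →
      ∃ g : M ≃[L] M, ∀ a : K, g a = (p a : M)
  openSandwich : ∀ H : Subgroup (M ≃[L] M), IsOpen (H : Set (M ≃[L] M)) →
    ∃! K : Set M, K.Finite ∧ aclg L M K = K ∧ pstab L M K ≤ H ∧ H ≤ sstab L M K


/-- Generalized pointwise stabilizer `G_(K,L)`. -/
def genStab (K : Set M) (Lsub : Subgroup (Equiv.Perm K)) : Subgroup (M ≃[L] M) where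
  carrier := {f | ∃ p ∈ Lsub, ∀ a : K, f a = (p a : M)}
  one_mem' := ⟨1, Lsub.one_mem, fun a => by simp⟩
  mul_mem' := by
    rintro f g ⟨p, hp, hfp⟩ ⟨q, hq, hgq⟩
    refine ⟨p * q, Lsub.mul_mem hp hq, fun a => ?_⟩
    rw [aut_mul_apply, hgq a, hfp (q a)]
    rfl
  inv_mem' := by
    rintro f ⟨p, hp, hfp⟩
    refine ⟨p⁻¹, Lsub.inv_mem hp, fun a => ?_⟩
    have h1 : f ((p⁻¹ a : K) : M) = ((p (p⁻¹ a) : K) : M) := hfp _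
    rw [Equiv.Perm.coe_inv, Equiv.apply_symm_apply] at h1
    rw [aut_inv_apply, ← h1, FirstOrder.Language.Equiv.symm_apply_apply]
    rfl

/-- `GS(M)`: the collection of generalized pointwise stabilizers. -/
def GS : Set (Subgroup (M ≃[L] M)) :=
  {H | ∃ K ∈ AA L M, ∃ Lsub : Subgroup (Equiv.Perm K),
    (∀ p ∈ Lsub, IsPartialIso L M K K (p : K ≃ K)) ∧ H = genStab L M K Lsub}

/-- `PS(M)`: the collection of pointwise stabilizers of members of `A(M)`. -/
def PS : Set (Subgroup (M ≃[L] M)) := {H | ∃ K ∈ AA L M, H = pstab L M K}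

/-- The lattice `A₊(M)`. -/
def Aplus : Set (Set M) := AA L M ∪ {dclg0 L M}

/-- Covering relation in `S`. -/
def hasseCovers {α : Type*} (S : Set (Set α)) (A B : Set α) : Prop :=
  A ∈ S ∧ B ∈ S ∧ A ⊂ B ∧ ¬∃ C ∈ S, A ⊂ C ∧ C ⊂ B

/-- Adjacency in the Hasse diagram of `S`. -/
def hasseAdj {α : Type*} (S : Set (Set α)) (A B : Set α) : Prop :=
  hasseCovers S A B ∨ hasseCovers S B A

/-- `A_k(M)`: members of `A(M)` distinct from `dcl(∅)` at distance `≤ k` from the bottom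
of the lattice `A₊(M)` in its Hasse diagram. -/
def Ak (k : ℕ) : Set (Set M) :=
  {K | K ∈ AA L M ∧ K ≠ dclg0 L M ∧ ∃ (j : ℕ) (c : Fin (j + 1) → Set M), j ≤ k ∧
    c 0 = dclg0 L M ∧ c (Fin.last j) = K ∧
    ∀ i : Fin j, hasseAdj (Aplus L M) (c i.castSucc) (c i.succ)}

/-- `A_k(M)` for `k ≤ ω`, with `A_ω(M) = A(M)`. -/
def AkE (k : ℕ∞) : Set (Set M) :=
  match k with
  | ⊤ => AA L M
  | (k : ℕ) => Ak L M k

/-- `k_M`: the supremum of lengths of strict chains of Galois-algebraic closures of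
singletons. -/
noncomputable def kM : ℕ∞ :=
  ⨆ k ∈ {k : ℕ | ∃ a : Fin k → M, ∀ i j : Fin k, i < j → aclg L M {a i} ⊂ aclg L M {a j}},
    (k : ℕ∞)

/-- The domain of the expanded structure `E^ex_M(k)`: triples `(K, p, K')` with
`K, K' ∈ A_k(M)` and `p : K ≅ K'`. -/
structure ExTriple (k : ℕ∞) where
  K : Set M
  K' : Set M
  hK : K ∈ AkE L M k
  hK' : K' ∈ AkE L M k
  p : K ≃ K'
  iso : IsPartialIso L M K K' p

/-- The unary predicate of `E^ex_M(k)` holding of the identity triples. -/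
def IsIdTriple {k : ℕ∞} (t : ExTriple L M k) : Prop :=
  t.K = t.K' ∧ ∀ a : t.K, (t.p a : M) = (a : M)

/-- The `n`-ary relation `E_n` of `E^ex_M(k)`. -/
def ERel {k : ℕ∞} {n : ℕ} (x : Fin n → ExTriple L M k) : Prop :=
  ∃ g : M ≃[L] M, ∀ (i : Fin n) (a : (x i).K), g a = ((x i).p a : M)

/-- The binary relation `Dom` of `E^ex_M(k)`. -/
def DomRel {k : ℕ∞} (t s : ExTriple L M k) : Prop := IsIdTriple L M s ∧ s.K = t.K

/-- The binary relation `Cod` of `E^ex_M(k)`. -/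
def CodRel {k : ℕ∞} (t s : ExTriple L M k) : Prop := IsIdTriple L M s ∧ s.K = t.K'

variable {L M}

/-- A bijection between the domains of `E^ex_M(k)` and `E^ex_N(k)` is an isomorphism
if it preserves the identity-triple predicate, all the relations `E_n`, `Dom` and `Cod`. -/
def IsExIso {L' : FirstOrder.Language} {N : Type*} [L'.Structure N] {k : ℕ∞}
    (F : ExTriple L M k ≃ ExTriple L' N k) : Prop :=
  (∀ t, IsIdTriple L M t ↔ IsIdTriple L' N (F t)) ∧
  (∀ (n : ℕ) (x : Fin n → ExTriple L M k), ERel L M x ↔ ERel L' N (F ∘ x)) ∧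
  (∀ t s, DomRel L M t s ↔ DomRel L' N (F t) (F s)) ∧
  (∀ t s, CodRel L M t s ↔ CodRel L' N (F t) (F s))

variable (L M)

/-- The automorphism group of the expanded structure `E^ex_M(k)`. -/
def exAut (k : ℕ∞) : Subgroup (Equiv.Perm (ExTriple L M k)) where
  carrier := {σ | IsExIso (σ : ExTriple L M k ≃ ExTriple L M k)}
  one_mem' := by
    refine ⟨fun t => ?_, fun n x => ?_, fun t s => ?_, fun t s => ?_⟩ <;>
      simp [Equiv.Perm.coe_one, Function.comp_def]
  mul_mem' := by
    rintro σ τ ⟨hσ1, hσ2, hσ3, hσ4⟩ ⟨hτ1, hτ2, hτ3, hτ4⟩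
    refine ⟨fun t => ?_, fun n x => ?_, fun t s => ?_, fun t s => ?_⟩
    · exact (hτ1 t).trans (hσ1 (τ t))
    · exact (hτ2 n x).trans (hσ2 n (τ ∘ x))
    · exact (hτ3 t s).trans (hσ3 (τ t) (τ s))
    · exact (hτ4 t s).trans (hσ4 (τ t) (τ s))
  inv_mem' := by
    rintro σ ⟨hσ1, hσ2, hσ3, hσ4⟩
    refine ⟨fun t => ?_, fun n x => ?_, fun t s => ?_, fun t s => ?_⟩
    · have := hσ1 (σ⁻¹ t); simpa using this.symm
    · have := hσ2 n (⇑(σ⁻¹) ∘ x)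
      have hx : ⇑σ ∘ ⇑(σ⁻¹) ∘ x = x := by
        funext i; simp
      rw [hx] at this
      exact this.symm
    · have := hσ3 (σ⁻¹ t) (σ⁻¹ s); simpa using this.symm
    · have := hσ4 (σ⁻¹ t) (σ⁻¹ s); simpa using this.symm

/-- The subgroup of topological automorphisms of a topological group. -/
def topMulAut (G : Type*) [Group G] [TopologicalSpace G] : Subgroup (MulAut G) where
  carrier := {α | Continuous (α : G → G) ∧ Continuous (α.symm : G → G)}
  one_mem' := ⟨continuous_id, continuous_id⟩
  mul_mem' := by
    rintro α β ⟨hα1, hα2⟩ ⟨hβ1, hβ2⟩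
    exact ⟨hα1.comp hβ1, hβ2.comp hα2⟩
  inv_mem' := by
    rintro α ⟨h1, h2⟩
    exact ⟨h2, h1⟩

/-- A group isomorphism between topological groups which is a homeomorphism. -/
def IsTopIso {G H : Type*} [Group G] [Group H] [TopologicalSpace G] [TopologicalSpace H]
    (e : G ≃* H) : Prop :=
  Continuous (e : G → H) ∧ Continuous (e.symm : H → G)

/-- The natural homomorphism from `Aut(M)` to the symmetric group on `M`. -/
def toPerm : (M ≃[L] M) →* Equiv.Perm M where
  toFun g := g.toEquiv
  map_one' := rfl
  map_mul' f g := Equiv.ext fun _ => rfl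

/-- The orbit equivalence relation on `n`-tuples. -/
def orbRel (n : ℕ) (x y : Fin n → M) : Prop := ∃ g : M ≃[L] M, ∀ i, g (x i) = y i

/-- The automorphism group of the orbital structure `E_M`: permutations of `M`
preserving each orbit equivalence relation. -/
def autOrbital : Subgroup (Equiv.Perm M) where
  carrier := {f | ∀ (n : ℕ) (x y : Fin n → M),
    orbRel L M n x y ↔ orbRel L M n (f ∘ x) (f ∘ y)}
  one_mem' := by intro n x y; simp [Equiv.Perm.coe_one]
  mul_mem' := by
    intro f g hf hg n x y
    exact (hg n x y).trans (hf n (g ∘ x) (g ∘ y))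
  inv_mem' := by
    intro f hf n x y
    have := hf n (⇑(f⁻¹) ∘ x) (⇑(f⁻¹) ∘ y)
    have hx : ⇑f ∘ ⇑(f⁻¹) ∘ x = x := by funext i; simp
    have hy : ⇑f ∘ ⇑(f⁻¹) ∘ y = y := by funext i; simp
    rw [hx, hy] at this
    exact this.symm

/-- `Aut°(E_M)`: automorphisms of the orbital structure preserving each orbit
equivalence class. -/
def autOrbitalFix : Subgroup (Equiv.Perm M) where
  carrier := {f | f ∈ autOrbital L M ∧ ∀ (n : ℕ) (x : Fin n → M), orbRel L M n x (f ∘ x)}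
  one_mem' := ⟨(autOrbital L M).one_mem, fun n x => ⟨1, fun i => by simp [Equiv.Perm.coe_one]⟩⟩
  mul_mem' := by
    rintro f g ⟨hf, hf2⟩ ⟨hg, hg2⟩
    refine ⟨(autOrbital L M).mul_mem hf hg, fun n x => ?_⟩
    obtain ⟨a, ha⟩ := hg2 n x
    obtain ⟨b, hb⟩ := hf2 n (g ∘ x)
    exact ⟨b * a, fun i => by rw [aut_mul_apply, ha i, hb i]; rfl⟩
  inv_mem' := by
    rintro f ⟨hf, hf2⟩
    refine ⟨(autOrbital L M).inv_mem hf, fun n x => ?_⟩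
    obtain ⟨a, ha⟩ := hf2 n (⇑(f⁻¹) ∘ x)
    refine ⟨a⁻¹, fun i => ?_⟩
    have hi := ha i
    simp only [Function.comp_apply, Equiv.Perm.coe_inv, Equiv.apply_symm_apply] at hi
    rw [← hi, aut_inv_apply, FirstOrder.Language.Equiv.symm_apply_apply]
    rfl

/-- A homogeneous structure: isomorphisms between finite substructures extend to
automorphisms. -/
def Homogeneous : Prop :=
  ∀ (K K' : Set M), K.Finite → K'.Finite → ∀ p : K ≃ K',
    IsPartialIso L M K K' p → ∃ g : M ≃[L] M, ∀ a : K, g a = (p a : M)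

/-- Weak elimination of imaginaries, phrased group-theoretically: every open subgroup is
sandwiched between the pointwise and setwise stabilizers of a unique smallest finite
Galois-algebraically closed set. -/
def HasWEI : Prop :=
  ∀ H : Subgroup (M ≃[L] M), IsOpen (H : Set (M ≃[L] M)) →
    ∃ K : Set M, (K.Finite ∧ aclg L M K = K ∧ pstab L M K ≤ H ∧ H ≤ sstab L M K) ∧
      ∀ K' : Set M, (K'.Finite ∧ aclg L M K' = K' ∧ pstab L M K' ≤ H ∧ H ≤ sstab L M K') →
        K ⊆ K'

/-- No algebraicity: every finite set is Galois-algebraically closed. -/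
def NoAlgebraicity : Prop := ∀ A : Set M, A.Finite → aclg L M A = A

/-- The small index property: every subgroup of index `< 2^ℵ₀` is open. -/
def SIP : Prop :=
  ∀ H : Subgroup (M ≃[L] M), Cardinal.mk ((M ≃[L] M) ⧸ H) < Cardinal.continuum →
    IsOpen (H : Set (M ≃[L] M))

/-- An oligomorphic action: finitely many orbits on `n`-tuples for every `n`. -/
def Oligo (G : Type*) [Group G] (X : Type*) [MulAction G X] : Prop :=
  ∀ n : ℕ, Finite (MulAction.orbitRel.Quotient G (Fin n → X))

end Paper

namespace Paper

/-- ω-categoricity: `M` is, up to isomorphism, the unique countable model of its complete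
first-order theory. -/
def IsOmegaCategorical (L : FirstOrder.Language) (M : Type w) [L.Structure M] : Prop :=
  Countable M ∧ ∀ (N : Type w) (iN : L.Structure N), Countable N → Nonempty N →
    (@FirstOrder.Language.Theory.Model L N iN (L.completeTheory M)) →
      Nonempty (@FirstOrder.Language.Equiv L N M iN _)


/-- The Polish group topology on `Sym(ω)`. -/
instance permTopology : TopologicalSpace (Equiv.Perm ℕ) :=
  letI : TopologicalSpace ℕ := ⊥
  TopologicalSpace.induced
    (fun g => ((g : ℕ → ℕ), ((g⁻¹ : Equiv.Perm ℕ) : ℕ → ℕ))) inferInstance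

/-- The canonical language of a permutation group `G ≤ Sym(ω)`: one `n`-ary relation
symbol for each orbit of `G` on `ωⁿ`. -/
def canonicalLanguage (G : Subgroup (Equiv.Perm ℕ)) : FirstOrder.Language where
  Functions := fun _ => Empty
  Relations := fun n => Quotient (MulAction.orbitRel G (Fin n → ℕ))

/-- The canonical structure `M_G` of `G ≤ Sym(ω)`: each orbit relation symbol names the
corresponding orbit. -/
instance canonicalStructure (G : Subgroup (Equiv.Perm ℕ)) :
    (canonicalLanguage G).Structure ℕ where
  funMap := fun f _ => f.elim
  RelMap := fun {n} r x => Quotient.mk (MulAction.orbitRel G (Fin n → ℕ)) x = r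

/-!
Every member of `A_k(M)` is joined to `dcl(∅)` by a path of length at most `k` in the Hasse
diagram of `A₊(M)`. A downward step shrinks the set, and an upward step `C ⋖ D` gives
`D = acl(C ∪ {x})`; as `Aut(M)` is oligomorphic, `|acl(A)|` is bounded in terms of `|A|`, so the
members of `A_k(M)` have bounded size `B`. Conjugation by `Aut(M)` acts on `E^ex_M(k)` by
automorphisms, and a triple `(K, p, K')` is determined by an enumeration of `K` of length `B`
together with its image under `p`. Tuples of triples whose codes lie in one `Aut(M)`-orbit of
tuples of `M` therefore lie in one orbit of `Aut(E^ex_M(k))`, and there are finitely many such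
orbits.
-/

section OrbitCounting

open MulAction

theorem finite_quotient_of_code {α Q : Type*} [Finite Q] (s : Setoid α) (c : α → Q)
    (h : ∀ x y, c x = c y → s x y) : Finite (Quotient s) := by
  refine Finite.of_injective (fun q : Quotient s => c '' {a | ⟦a⟧ = q}) fun q₁ q₂ hq => ?_
  obtain ⟨a, rfl⟩ := Quotient.exists_rep q₁
  have hq : c '' {b | ⟦b⟧ = ⟦a⟧} = c '' {b | ⟦b⟧ = q₂} := hq
  obtain ⟨b, rfl, hba⟩ : c a ∈ c '' {b | ⟦b⟧ = q₂} := hq ▸ ⟨a, rfl, rfl⟩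
  exact Quotient.sound (h _ _ hba.symm)

variable {Γ X : Type*} [Group Γ] [MulAction Γ X]

theorem finite_setOf_orbit_finite [Finite (orbitRel.Quotient Γ X)] :
    {x : X | (orbit Γ x).Finite}.Finite := by
  refine (Set.finite_iUnion fun q : {q : orbitRel.Quotient Γ X // q.orbit.Finite} => q.2).subset
    fun x hx => Set.mem_iUnion.2 ⟨⟨⟦x⟧, hx⟩, orbitRel.Quotient.mem_orbit.2 rfl⟩

theorem finite_range_of_smul_invariant [Finite (orbitRel.Quotient Γ X)] {β : Type*}
    (F : X → β) (hF : ∀ (g : Γ) x, F (g • x) = F x) : (Set.range F).Finite := by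
  refine (Set.finite_range (Quotient.lift F ?_ : orbitRel.Quotient Γ X → β)).subset ?_
  · rintro _ x ⟨g, rfl⟩
    exact hF g x
  · rintro _ ⟨x, rfl⟩
    exact ⟨⟦x⟧, rfl⟩

theorem Oligo.pi {ι : Type*} [Finite ι] (h : Oligo Γ X) : Oligo Γ (ι → X) := by
  intro n
  obtain ⟨N, ⟨e⟩⟩ := Finite.exists_equiv_fin (Fin n × ι)
  have := h N
  refine finite_quotient_of_code _
    (fun x => (⟦fun m => x (e.symm m).1 (e.symm m).2⟧ : orbitRel.Quotient Γ (Fin N → X)))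
    fun x y hxy => ?_
  obtain ⟨g, hg⟩ := Quotient.exact hxy
  exact ⟨g, funext fun i => funext fun j => by simpa using congr_fun hg (e (i, j))⟩

theorem iff_smul_of_imp_smul {P : X → Prop} (h : ∀ (g : Γ) x, P x → P (g • x)) (g : Γ)
    (x : X) : P x ↔ P (g • x) :=
  ⟨h g x, fun hx => by simpa using h g⁻¹ _ hx⟩

end OrbitCounting

section GaloisClosure

open MulAction
open scoped Pointwise

variable {L : FirstOrder.Language} {M : Type*} [L.Structure M]

theorem subset_aclg (A : Set M) : A ⊆ aclg L M A := fun a ha =>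
  (Set.finite_singleton a).subset <| by
    rintro _ ⟨g, rfl⟩
    exact g.2 a ha

theorem dclg0_subset_aclg (A : Set M) : dclg0 L M ⊆ aclg L M A := fun a ha =>
  (Set.finite_singleton a).subset <| by
    rintro _ ⟨g, rfl⟩
    exact ha g

theorem aclg_mono {A B : Set M} (h : A ⊆ B) : aclg L M A ⊆ aclg L M B := fun b hb =>
  hb.subset <| by
    rintro _ ⟨g, rfl⟩
    exact ⟨⟨g, fun a ha => g.2 a (h ha)⟩, rfl⟩

theorem inv_mul_mul_mem_pstab {A : Set M} {g h : M ≃[L] M} (hh : h ∈ pstab L M (g • A)) :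
    g⁻¹ * h * g ∈ pstab L M A := fun a ha => by
  simp [hh (g a) (Set.smul_mem_smul_set ha)]

theorem smul_mem_aclg (g : M ≃[L] M) {A : Set M} {b : M} (hb : b ∈ aclg L M A) :
    g • b ∈ aclg L M (g • A) := by
  refine (hb.image (g • ·)).subset ?_
  rintro _ ⟨h, rfl⟩
  refine ⟨(⟨g⁻¹ * h * g, inv_mul_mul_mem_pstab h.2⟩ : pstab L M A) • b, ⟨_, rfl⟩, ?_⟩
  simp [Subgroup.smul_def]

theorem smul_aclg (g : M ≃[L] M) (A : Set M) : g • aclg L M A = aclg L M (g • A) := by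
  refine subset_antisymm (Set.smul_set_subset_iff.2 fun b hb => smul_mem_aclg g hb)
    fun b hb => Set.mem_smul_set_iff_inv_smul_mem.2 ?_
  simpa using smul_mem_aclg g⁻¹ hb

theorem smul_dclg0 (g : M ≃[L] M) : g • dclg0 L M = dclg0 L M := by
  ext a
  rw [Set.mem_smul_set_iff_inv_smul_mem]
  refine ⟨fun ha => ?_, fun ha => by rwa [aut_smul_def, ha g⁻¹]⟩
  have hfix : g⁻¹ • a = a := by simpa using (ha g).symm
  rwa [hfix] at ha

theorem aclg_aclg {A : Set M} (hA : (aclg L M A).Finite) :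
    aclg L M (aclg L M A) = aclg L M A := by
  refine subset_antisymm (fun b hb => ?_) (subset_aclg _)
  set C := aclg L M A
  have : Finite C := hA.to_subtype
  have hC : ∀ h : pstab L M A, ∀ c ∈ C, h • c ∈ C := fun h c hc => by
    show (orbit _ (h • c)).Finite
    rwa [orbit_smul]
  -- `h ∈ G_(A)` permutes the finite set `C`, and this permutation determines `h` up to `G_(C)`
  let r : pstab L M A → (C → C) := fun h c => ⟨h • c, hC h c c.2⟩
  have hfin : ∀ ρ : C → C,
      (((Function.invFun r ρ : pstab L M A) : M ≃[L] M) • orbit (pstab L M C) b).Finite :=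
    fun _ => hb.smul_set
  refine (Set.finite_iUnion hfin).subset ?_
  rintro _ ⟨h, rfl⟩
  set h₀ := Function.invFun r (r h)
  have hh₀ : r h₀ = r h := Function.invFun_eq ⟨h, rfl⟩
  have hmem : (h₀ : M ≃[L] M)⁻¹ * h ∈ pstab L M C := fun c hc => by
    have := congr_arg Subtype.val (congr_fun hh₀ ⟨c, hc⟩)
    simp only [r, Subgroup.smul_def, aut_smul_def] at this
    simp [← this]
  refine Set.mem_iUnion.2 ⟨r h, ⟨_, ⟨⟨_, hmem⟩, rfl⟩, ?_⟩⟩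
  simp [h₀, Subgroup.smul_def]

end GaloisClosure

section HasseDiagram

open scoped Pointwise

theorem hasseAdj.mem_left {α : Type*} {S : Set (Set α)} {A B : Set α} (h : hasseAdj S A B) :
    A ∈ S := by
  rcases h with h | h
  exacts [h.1, h.2.1]

variable {Γ α : Type*} [Group Γ] [MulAction Γ α] {S : Set (Set α)}

theorem hasseCovers_smul (hS : ∀ (g : Γ), ∀ K ∈ S, g • K ∈ S) (g : Γ) {A B : Set α}
    (h : hasseCovers S A B) : hasseCovers S (g • A) (g • B) := by
  obtain ⟨hA, hB, hAB, hno⟩ := h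
  have hss : ∀ {g : Γ} {A B : Set α}, g • A ⊂ g • B ↔ A ⊂ B := by
    simp [ssubset_iff_subset_not_subset]
  refine ⟨hS g A hA, hS g B hB, hss.2 hAB, fun ⟨C, hC, hAC, hCB⟩ => hno ?_⟩
  rw [← smul_inv_smul g C, hss] at hAC hCB
  exact ⟨g⁻¹ • C, hS _ C hC, hAC, hCB⟩

theorem hasseAdj_smul (hS : ∀ (g : Γ), ∀ K ∈ S, g • K ∈ S) (g : Γ) {A B : Set α}
    (h : hasseAdj S A B) : hasseAdj S (g • A) (g • B) :=
  h.imp (hasseCovers_smul hS g) (hasseCovers_smul hS g)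

end HasseDiagram

section Invariance

open scoped Pointwise

variable {L : FirstOrder.Language} {M : Type*} [L.Structure M]

theorem smul_mem_AA (g : M ≃[L] M) {K : Set M} (hK : K ∈ AA L M) : g • K ∈ AA L M := by
  obtain ⟨A, hA, rfl⟩ := hK
  exact ⟨g • A, hA.smul_set, smul_aclg g A⟩

theorem smul_mem_Aplus (g : M ≃[L] M) {K : Set M} (hK : K ∈ Aplus L M) : g • K ∈ Aplus L M := by
  rcases hK with hK | rfl
  · exact Or.inl (smul_mem_AA g hK)
  · exact Or.inr (smul_dclg0 g)

theorem smul_mem_Ak (g : M ≃[L] M) {k : ℕ} {K : Set M} (hK : K ∈ Ak L M k) :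
    g • K ∈ Ak L M k := by
  obtain ⟨hAA, hne, j, c, hj, h0, hlast, hadj⟩ := hK
  refine ⟨smul_mem_AA g hAA, fun h => hne ?_, j, fun i => g • c i, hj, ?_, ?_,
    fun i => hasseAdj_smul (fun g _ => smul_mem_Aplus g) g (hadj i)⟩
  · rw [← smul_dclg0 g] at h
    exact smul_left_cancel g h
  · simp only [h0, smul_dclg0]
  · simp only [hlast]

theorem smul_mem_AkE (g : M ≃[L] M) {k : ℕ∞} {K : Set M} (hK : K ∈ AkE L M k) :
    g • K ∈ AkE L M k := by
  cases k with
  | top => exact smul_mem_AA g hK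
  | coe k => exact smul_mem_Ak g hK

end Invariance

section Conjugation

open scoped Pointwise
open FirstOrder.Language.Structure (funMap)

variable {L : FirstOrder.Language} {M : Type*} [L.Structure M]

def conjEquiv (g : M ≃[L] M) {K K' : Set M} (p : K ≃ K') : ↥(g • K) ≃ ↥(g • K') :=
  (((MulAction.toPerm g).subtypeEquiv fun _ => Set.smul_mem_smul_set_iff.symm).symm.trans p).trans
    ((MulAction.toPerm g).subtypeEquiv fun _ => Set.smul_mem_smul_set_iff.symm)

theorem conjEquiv_apply_coe (g : M ≃[L] M) {K K' : Set M} (p : K ≃ K') (a : ↥(g • K)) :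
    (conjEquiv g p a : M) = g • (p ⟨g⁻¹ • a, Set.mem_smul_set_iff_inv_smul_mem.1 a.2⟩ : M) :=
  rfl

theorem IsPartialIso.conj {K K' : Set M} {p : K ≃ K'} (hp : IsPartialIso L M K K' p)
    (g : M ≃[L] M) : IsPartialIso L M (g • K) (g • K') (conjEquiv g p) := by
  have pull : ∀ {n} (x : Fin n → ↥(g • K)), ∃ y : Fin n → K,
      (fun i => (x i : M)) = ⇑g ∘ (fun i => (y i : M)) ∧
        (fun i => (conjEquiv g p (x i) : M)) = ⇑g ∘ fun i => (p (y i) : M) :=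
    fun x => ⟨fun i => ⟨g⁻¹ • x i, Set.mem_smul_set_iff_inv_smul_mem.1 (x i).2⟩,
      funext fun i => (smul_inv_smul g _).symm, rfl⟩
  constructor
  · intro n f x
    obtain ⟨y, hx, hpx⟩ := pull x
    obtain ⟨hy, hpy⟩ := hp.1 f y
    have hfx : funMap f (fun i => (x i : M)) = g (funMap f fun i => (y i : M)) := by
      rw [hx, g.map_fun]
    refine ⟨hfx ▸ Set.smul_mem_smul_set hy, ?_⟩
    rw [conjEquiv_apply_coe, hpx, ← g.map_fun, ← hpy]
    congr 3
    exact Subtype.ext <| (congrArg _ hfx).trans (inv_smul_smul g _)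
  · intro n r x
    obtain ⟨y, hx, hpx⟩ := pull x
    rw [hx, hpx, g.map_rel, g.map_rel]
    exact hp.2 r y

end Conjugation

section TripleAction

open scoped Pointwise

variable {L : FirstOrder.Language} {M : Type*} [L.Structure M] {k : ℕ∞}

theorem ExTriple.ext' {t s : ExTriple L M k} (hK : t.K = s.K) (hK' : t.K' = s.K')
    (hp : ∀ (a : M) (ha : a ∈ t.K) (ha' : a ∈ s.K), (t.p ⟨a, ha⟩ : M) = s.p ⟨a, ha'⟩) :
    t = s := by
  obtain ⟨K, K', _, _, p, _⟩ := t
  obtain ⟨_, _, _, _, q, _⟩ := s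
  dsimp only at hK hK' hp
  subst hK hK'
  obtain rfl : p = q := Equiv.ext fun a => Subtype.ext (hp a a.2 a.2)
  rfl

instance : SMul (M ≃[L] M) (ExTriple L M k) where
  smul g t := ⟨g • t.K, g • t.K', smul_mem_AkE g t.hK, smul_mem_AkE g t.hK', conjEquiv g t.p,
    t.iso.conj g⟩

@[simp] theorem ExTriple.smul_K (g : M ≃[L] M) (t : ExTriple L M k) : (g • t).K = g • t.K := rfl

@[simp] theorem ExTriple.smul_K' (g : M ≃[L] M) (t : ExTriple L M k) : (g • t).K' = g • t.K' :=
  rfl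

theorem ExTriple.smul_p_coe (g : M ≃[L] M) (t : ExTriple L M k) (a : (g • t).K) :
    ((g • t).p a : M) = g • (t.p ⟨g⁻¹ • a, Set.mem_smul_set_iff_inv_smul_mem.1 a.2⟩ : M) :=
  rfl

instance : MulAction (M ≃[L] M) (ExTriple L M k) where
  one_smul t := ExTriple.ext' (one_smul _ t.K) (one_smul _ t.K') fun a _ _ => by
    rw [ExTriple.smul_p_coe]
    simp
  mul_smul g h t := ExTriple.ext' (mul_smul g h t.K) (mul_smul g h t.K') fun a _ _ => by
    rw [ExTriple.smul_p_coe, ExTriple.smul_p_coe, ExTriple.smul_p_coe]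
    simp [mul_smul]

theorem IsIdTriple.smul {t : ExTriple L M k} (ht : IsIdTriple L M t) (g : M ≃[L] M) :
    IsIdTriple L M (g • t) := by
  refine ⟨congr_arg (g • ·) ht.1, fun a => ?_⟩
  rw [ExTriple.smul_p_coe, ht.2]
  exact smul_inv_smul g _

theorem ERel.smul {n : ℕ} {x : Fin n → ExTriple L M k} (hx : ERel L M x) (g : M ≃[L] M) :
    ERel L M (g • x) := by
  obtain ⟨h, hh⟩ := hx
  refine ⟨g * h * g⁻¹, fun i a => ?_⟩
  change (g * h * g⁻¹) (a : M) = ((g • x i).p a : M)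
  rw [ExTriple.smul_p_coe, ← hh i]
  simp

theorem DomRel.smul {t s : ExTriple L M k} (h : DomRel L M t s) (g : M ≃[L] M) :
    DomRel L M (g • t) (g • s) :=
  ⟨h.1.smul g, congr_arg (g • ·) h.2⟩

theorem CodRel.smul {t s : ExTriple L M k} (h : CodRel L M t s) (g : M ≃[L] M) :
    CodRel L M (g • t) (g • s) :=
  ⟨h.1.smul g, congr_arg (g • ·) h.2⟩

theorem toPerm_mem_exAut (g : M ≃[L] M) : MulAction.toPerm g ∈ exAut L M k :=
  ⟨iff_smul_of_imp_smul (fun g _ h => h.smul g) g,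
    fun _ => iff_smul_of_imp_smul (fun g _ h => h.smul g) g,
    fun t s => iff_smul_of_imp_smul (P := fun q : ExTriple L M k × _ => DomRel L M q.1 q.2)
      (fun g _ h => h.smul g) g (t, s),
    fun t s => iff_smul_of_imp_smul (P := fun q : ExTriple L M k × _ => CodRel L M q.1 q.2)
      (fun g _ h => h.smul g) g (t, s)⟩

end TripleAction

section Bounds

open MulAction
open scoped Pointwise

variable {L : FirstOrder.Language} {M : Type*} [L.Structure M]

theorem finite_quotient_pstab (hM : Oligo (M ≃[L] M) M) {A : Set M} (hA : A.Finite) :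
    Finite (orbitRel.Quotient (pstab L M A) M) := by
  obtain ⟨m, a, rfl⟩ := hA.fin_embedding
  have := hM (m + 1)
  refine finite_quotient_of_code _
    (fun b => (⟦Fin.snoc a b⟧ : orbitRel.Quotient (M ≃[L] M) (Fin (m + 1) → M)))
    fun b b' hbb' => ?_
  obtain ⟨g, hg⟩ := Quotient.exact hbb'
  have hgA : g ∈ pstab L M (Set.range a) := by
    rintro _ ⟨i, rfl⟩
    simpa using congr_fun hg i.castSucc
  exact ⟨⟨g, hgA⟩, by simpa [Subgroup.smul_def] using congr_fun hg (Fin.last m)⟩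

theorem aclg_finite (hM : Oligo (M ≃[L] M) M) {A : Set M} (hA : A.Finite) :
    (aclg L M A).Finite :=
  have := finite_quotient_pstab hM hA
  finite_setOf_orbit_finite

theorem finite_of_mem_Aplus (hM : Oligo (M ≃[L] M) M) {K : Set M} (hK : K ∈ Aplus L M) :
    K.Finite := by
  rcases hK with ⟨A, hA, rfl⟩ | rfl
  · exact aclg_finite hM hA
  · exact (aclg_finite hM Set.finite_empty).subset (dclg0_subset_aclg ∅)

theorem exists_ncard_aclg_le (hM : Oligo (M ≃[L] M) M) (m : ℕ) :
    ∃ C, ∀ A : Set M, A.Finite → A.ncard ≤ m → (aclg L M A).ncard ≤ C := by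
  have hfin : ∀ j, (Set.range fun x : Fin j → M => (aclg L M (Set.range x)).ncard).Finite :=
    fun j => by
      have := hM j
      refine finite_range_of_smul_invariant (Γ := M ≃[L] M) _ fun g x => ?_
      change (aclg L M (Set.range fun i => g • x i)).ncard = _
      rw [← Set.smul_set_range, ← smul_aclg, Set.ncard_smul_set]
  obtain ⟨C, hC⟩ := (Set.finite_iUnion fun j : Fin (m + 1) => hfin j).bddAbove
  refine ⟨C, fun A hA hAm => ?_⟩
  obtain ⟨j, a, rfl⟩ := hA.fin_embedding
  rw [Set.ncard_range_of_injective a.injective, Nat.card_fin] at hAm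
  exact hC (Set.mem_iUnion.2 ⟨⟨j, by omega⟩, a, rfl⟩)

theorem eq_aclg_insert_of_hasseCovers (hM : Oligo (M ≃[L] M) M) {C D : Set M}
    (hC : C.Finite) (hD : D ∈ AA L M) (h : hasseCovers (Aplus L M) C D) :
    ∃ x, D = aclg L M (insert x C) := by
  obtain ⟨-, -, hCD, hno⟩ := h
  obtain ⟨x, hxD, hxC⟩ := Set.exists_of_ssubset hCD
  have hDD : aclg L M D = D := by
    obtain ⟨A, hA, rfl⟩ := hD
    exact aclg_aclg (aclg_finite hM hA)
  have hED : aclg L M (insert x C) ⊆ D :=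
    hDD ▸ aclg_mono (Set.insert_subset hxD hCD.subset)
  have hCE : C ⊂ aclg L M (insert x C) :=
    Set.ssubset_iff_of_subset ((Set.subset_insert x C).trans (subset_aclg _)) |>.2
      ⟨x, subset_aclg _ (Set.mem_insert x C), hxC⟩
  refine ⟨x, (hED.eq_of_not_ssubset fun hlt => hno ?_).symm⟩
  exact ⟨_, Or.inl ⟨_, hC.insert x, rfl⟩, hCE, hlt⟩

theorem hasseAdj_Aplus_cases (hM : Oligo (M ≃[L] M) M) {C D : Set M}
    (h : hasseAdj (Aplus L M) C D) :
    D ⊆ C ∨ D = dclg0 L M ∨ ∃ x, D = aclg L M (insert x C) := by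
  have hC := finite_of_mem_Aplus hM h.mem_left
  rcases h with h | h
  · rcases h.2.1 with hD | hD
    · exact Or.inr (Or.inr (eq_aclg_insert_of_hasseCovers hM hC hD h))
    · exact Or.inr (Or.inl hD)
  · exact Or.inl h.2.2.1.subset

theorem exists_ncard_le_of_mem_Ak (hM : Oligo (M ≃[L] M) M) (k : ℕ) :
    ∃ B, ∀ K ∈ Ak L M k, K.ncard ≤ B := by
  choose β hβ using exists_ncard_aclg_le hM
  -- `b i` bounds the size of the sets at distance `i` from `dcl(∅)`
  set b : ℕ → ℕ := fun i => (fun n => max n (β (n + 1)))^[i] (β 0)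
  have hb_succ : ∀ i, b (i + 1) = max (b i) (β (b i + 1)) := fun i =>
    Function.iterate_succ_apply' _ _ _
  have hb_mono : Monotone b := monotone_nat_of_le_succ fun i => hb_succ i ▸ le_max_left _ _
  have hdcl : (dclg0 L M).ncard ≤ b 0 :=
    (Set.ncard_le_ncard (dclg0_subset_aclg ∅) (aclg_finite hM Set.finite_empty)).trans
      (hβ 0 ∅ Set.finite_empty (by simp))
  refine ⟨b k, fun K ⟨_, _, j, c, hj, h0, hlast, hadj⟩ => ?_⟩
  have key : ∀ i : Fin (j + 1), (c i).ncard ≤ b i := by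
    refine Fin.induction (by rwa [h0]) fun i hi => ?_
    have hfin := finite_of_mem_Aplus hM (hadj i).mem_left
    rcases hasseAdj_Aplus_cases hM (hadj i) with hsub | hd | ⟨x, hx⟩
    · exact (Set.ncard_le_ncard hsub hfin).trans (hi.trans (hb_mono (Nat.le_succ _)))
    · exact hd ▸ hdcl.trans (hb_mono (Nat.zero_le _))
    · rw [hx, Fin.val_succ, hb_succ]
      refine (hβ _ _ (hfin.insert x) ?_).trans (le_max_right _ _)
      exact (Set.ncard_insert_le x _).trans (by simpa using hi)
  exact hlast ▸ (key _).trans (hb_mono hj)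

end Bounds

section Coding

open scoped Pointwise

variable {L : FirstOrder.Language} {M : Type*} [L.Structure M]

theorem exists_surjective_fin_of_ncard_le {α : Type*} {S : Set α} (hS : S.Finite)
    (hne : S.Nonempty) {B : ℕ} (hB : S.ncard ≤ B) : ∃ u : Fin B → S, Function.Surjective u := by
  have := hS.to_subtype
  let e := Finite.equivFin S
  have : Nonempty (Fin (Nat.card S)) := ⟨e ⟨_, hne.some_mem⟩⟩
  refine ⟨e.symm ∘ Function.invFun (Fin.castLE (Nat.card_coe_set_eq S ▸ hB)), ?_⟩
  exact e.symm.surjective.comp (Function.invFun_surjective (Fin.castLE_injective _))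

theorem nonempty_of_mem_Ak {k : ℕ} {K : Set M} (hK : K ∈ Ak L M k) : K.Nonempty := by
  obtain ⟨⟨A, -, rfl⟩, hne, -⟩ := hK
  refine Set.nonempty_iff_ne_empty.2 fun h => hne ?_
  rw [h]
  exact (Set.subset_empty_iff.1 (h ▸ dclg0_subset_aclg A)).symm

variable {k : ℕ∞}

theorem ExTriple.smul_eq_of_enum {s t : ExTriple L M k} {B : ℕ} {u : Fin B → s.K}
    {v : Fin B → t.K} (hu : Function.Surjective u) (hv : Function.Surjective v) (g : M ≃[L] M)
    (hK : ∀ j, g • (u j : M) = v j) (hp : ∀ j, g • (s.p (u j) : M) = t.p (v j)) : g • s = t := by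
  have range_val {K : Set M} {w : Fin B → K} (hw : Function.Surjective w) :
      Set.range (fun j => (w j : M)) = K :=
    (hw.range_comp Subtype.val).trans Subtype.range_coe
  refine ExTriple.ext' ?_ ?_ fun a ha ha' => ?_
  · rw [ExTriple.smul_K, ← range_val hu, Set.smul_set_range, ← range_val hv]
    simp only [hK]
  · rw [ExTriple.smul_K', ← range_val (s.p.surjective.comp hu), Set.smul_set_range,
      ← range_val (t.p.surjective.comp hv)]
    simp only [Function.comp_apply, hp]
  · obtain ⟨j, hj⟩ := hv ⟨a, ha'⟩
    have hu_j : u j = ⟨g⁻¹ • a, Set.mem_smul_set_iff_inv_smul_mem.1 ha⟩ :=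
      Subtype.ext (eq_inv_smul_iff.2 ((hK j).trans (congr_arg Subtype.val hj)))
    rw [ExTriple.smul_p_coe, ← hj]
    simp only [← hu_j, hp]

end Coding

section CanonicalStructure

variable {G : Subgroup (Equiv.Perm ℕ)}

def toCanonicalAut (g : G) : ℕ ≃[canonicalLanguage G] ℕ where
  toEquiv := g
  map_fun' f := f.elim
  map_rel' r x :=
    (congr_arg (· = r) (MulAction.orbitRel.Quotient.quotient_smul_eq (g := g) (a := x))).to_iff

theorem oligo_canonicalStructure (hG : Oligo G ℕ) : Oligo (ℕ ≃[canonicalLanguage G] ℕ) ℕ :=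
  fun n =>
    have := hG n
    finite_quotient_of_code _ (fun x => (⟦x⟧ : MulAction.orbitRel.Quotient G (Fin n → ℕ)))
      fun _ _ hxy =>
        let ⟨g, hg⟩ := Quotient.exact hxy
        ⟨toCanonicalAut g, hg⟩

end CanonicalStructure

theorem oligo_exAut {L : FirstOrder.Language} {M : Type*} [L.Structure M]
    (hM : Oligo (M ≃[L] M) M) (k : ℕ) : Oligo (exAut L M k) (ExTriple L M k) := by
  intro n
  obtain ⟨B, hB⟩ := exists_ncard_le_of_mem_Ak hM k
  choose u hu using fun t : ExTriple L M k =>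
    exists_surjective_fin_of_ncard_le (finite_of_mem_Aplus hM (Or.inl t.hK.1))
      (nonempty_of_mem_Ak t.hK) (hB _ t.hK)
  -- a triple is coded by an enumeration of its domain followed by the images under `p`
  let code (t : ExTriple L M k) : Fin B ⊕ Fin B → M :=
    Sum.elim (fun j => u t j) (fun j => t.p (u t j))
  have := hM.pi (ι := Fin B ⊕ Fin B) n
  refine finite_quotient_of_code _
    (fun x => (⟦fun i => code (x i)⟧ : MulAction.orbitRel.Quotient (M ≃[L] M) _))
    fun x y hxy => ?_
  obtain ⟨g, hg⟩ := Quotient.exact hxy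
  refine ⟨⟨MulAction.toPerm g, toPerm_mem_exAut g⟩, funext fun i => ?_⟩
  exact ExTriple.smul_eq_of_enum (hu _) (hu _) g (fun j => congr_fun (congr_fun hg i) (.inl j))
    (fun j => congr_fun (congr_fun hg i) (.inr j))

theorem stmt_17_general (G : Subgroup (Equiv.Perm ℕ))
    (holig : ∀ n : ℕ, Finite (MulAction.orbitRel.Quotient G (Fin n → ℕ)))
    (k : ℕ) :
    Oligo ↥(exAut (canonicalLanguage G) ℕ (k : ℕ∞))
      (ExTriple (canonicalLanguage G) ℕ (k : ℕ∞)) :=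
  oligo_exAut (oligo_canonicalStructure holig) k

/-- If `G` is an oligomorphic closed subgroup of `Sym(ω)` and `M_G` its
canonical structure, then for every `0 < k < ω` the expanded structure `E^ex_{M_G}(k)` is
ω-categorical, i.e. its automorphism group acts oligomorphically on its domain. -/
theorem stmt_17 (G : Subgroup (Equiv.Perm ℕ))
    (hclosed : IsClosed (G : Set (Equiv.Perm ℕ)))
    (holig : ∀ n : ℕ, Finite (MulAction.orbitRel.Quotient G (Fin n → ℕ)))
    (k : ℕ) (hk : 0 < k) :
    Oligo ↥(exAut (canonicalLanguage G) ℕ (k : ℕ∞))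
      (ExTriple (canonicalLanguage G) ℕ (k : ℕ∞)) :=
  stmt_17_general G holig k

end Paper
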